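/- The cover time of the circle admits the range representation σ_N = inf{t > 0 : max_{1 ≤ n ≤ N} sup_{s ∈ [0,t]} x_n(s) − min_{1 ≤ n ≤ N} inf_{s ∈ [0,t]} x_n(s) ≥ 2(l − r)}, where both infima are taken in [0,∞] with the convention inf ∅ = ∞. -/

import Mathlib

/-!
By time `t` the paths, all started at `0` and continuous, have jointly visited exactly the
interval `[m, M]`, where `M` is the largest maximum and `m` the smallest minimum (each path
sweeps `[min xₙ, max xₙ] ∋ 0` by the intermediate value theorem). So the detected set is the
closed `r`-neighbourhood of the arc `π [m, M]`, which is the whole circle exactly when the arc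
length `M - m` plus `2r` reaches the circumference `2l`.
-/

open Set
open scoped NNReal ENNReal

theorem iUnion_Icc_eq_Icc_iInf_iSup {α ι : Type*} [ConditionallyCompleteLinearOrder α]
    [Finite ι] [Nonempty ι] {a b : ι → α} {c : α} (hc : ∀ i, c ∈ Icc (a i) (b i)) :
    ⋃ i, Icc (a i) (b i) = Icc (⨅ i, a i) (⨆ i, b i) := by
  refine Subset.antisymm (iUnion_subset fun i => Icc_subset_Icc
    (ciInf_le (finite_range a).bddBelow i) (le_ciSup (finite_range b).bddAbove i))
    fun v hv => mem_iUnion.2 ?_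
  rcases le_total v c with hvc | hcv
  · obtain ⟨i, hi⟩ := exists_eq_ciInf_of_finite (f := a)
    exact ⟨i, hi ▸ hv.1, hvc.trans (hc i).2⟩
  · obtain ⟨i, hi⟩ := exists_eq_ciSup_of_finite (f := b)
    exact ⟨i, (hc i).1.trans hcv, hi ▸ hv.2⟩

theorem ContinuousOn.iUnion_image_Icc {α β ι : Type*}
    [ConditionallyCompleteLinearOrder α] [TopologicalSpace α] [OrderTopology α] [DenselyOrdered α]
    [ConditionallyCompleteLinearOrder β] [TopologicalSpace β] [OrderTopology β]
    [Finite ι] [Nonempty ι] {f : ι → α → β} {a b : α} {c : β}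
    (hab : a ≤ b) (hf : ∀ i, ContinuousOn (f i) (Icc a b)) (hfa : ∀ i, f i a = c) :
    ⋃ i, f i '' Icc a b = Icc (⨅ i, sInf (f i '' Icc a b)) (⨆ i, sSup (f i '' Icc a b)) := by
  have himage i : f i '' Icc a b = Icc (sInf (f i '' Icc a b)) (sSup (f i '' Icc a b)) :=
    (hf i).image_Icc hab
  refine (iUnion_congr himage).trans (iUnion_Icc_eq_Icc_iInf_iSup (c := c) fun i => ?_)
  exact himage i ▸ hfa i ▸ mem_image_of_mem _ (left_mem_Icc.2 hab)

theorem AddCircle.dist_coe_le_iff {p : ℝ} (a b ε : ℝ) :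
    dist (a : AddCircle p) (b : AddCircle p) ≤ ε ↔ ∃ k : ℤ, |a - (b + k * p)| ≤ ε := by
  rw [← Metric.mem_closedBall, ← mem_preimage, coe_real_preimage_closedBall_eq_iUnion]
  simp [Real.dist_eq, zsmul_eq_mul]

theorem AddCircle.forall_exists_Icc_dist_le_iff {p a b ε : ℝ} (hp : 0 < p) (hab : a ≤ b)
    (hε : 0 ≤ ε) :
    (∀ z : AddCircle p, ∃ y ∈ Icc a b, dist (y : AddCircle p) z ≤ ε) ↔
      p ≤ b - a + 2 * ε := by
  constructor
  · intro hcover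
    by_contra! hgap
    -- the antipode of the midpoint of `[a, b]` is farther than `ε` from the whole arc
    obtain ⟨y, hy, hyz⟩ := hcover (((a + b) / 2 + p / 2 : ℝ) : AddCircle p)
    obtain ⟨k, hk⟩ := (dist_coe_le_iff _ _ _).1 hyz
    rw [abs_le] at hk
    have hlo : (-1 : ℝ) * p < k * p := by linarith [hy.1]
    have hhi : (k : ℝ) * p < 0 * p := by linarith [hy.2]
    have hk_gt : -1 < k := by exact_mod_cast lt_of_mul_lt_mul_right hlo hp.le
    have hk_neg : k < 0 := by exact_mod_cast lt_of_mul_lt_mul_right hhi hp.le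
    omega
  · intro hlen z
    have := Fact.mk hp
    obtain ⟨⟨w, hw_ge, hw_lt⟩, rfl⟩ : ∃ w : Ico a (a + p), (w : AddCircle p) = z :=
      ⟨_, coe_equivIco⟩
    rcases le_total w b with hwb | hbw
    · exact ⟨w, ⟨hw_ge, hwb⟩, by simpa using hε⟩
    rcases le_total w (b + ε) with hwε | hεw
    · refine ⟨b, ⟨hab, le_rfl⟩, (dist_coe_le_iff _ _ _).2 ⟨0, ?_⟩⟩
      rw [abs_le]; constructor <;> push_cast <;> linarith
    · -- past `b + ε`, the point `w` is within `ε` of `a + p`, the other copy of `a`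
      refine ⟨a, ⟨le_rfl, hab⟩, (dist_coe_le_iff _ _ _).2 ⟨-1, ?_⟩⟩
      rw [abs_le]; constructor <;> push_cast <;> linarith

/-- **Range representation of the circle cover time.** Let `l > r > 0`, and let
`x 1, …, x N : [0,∞) → ℝ` be continuous paths starting at `0`, projected by
`π : ℝ → ℝ/(2lℤ)` onto the circle of circumference `2l` with its quotient metric.
The cover time with detection radius `r` equals
`inf {t > 0 : max_n sup_{s ∈ [0,t]} x_n(s) - min_n inf_{s ∈ [0,t]} x_n(s) ≥ 2(l-r)}`,
both infima taken in `[0,∞]` with `inf ∅ = ∞`. -/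
theorem circle_coverTime_eq_range_representation (l r : ℝ) (hr : 0 < r) (hlr : r < l)
    (N : ℕ) (hN : 1 ≤ N) (x : Fin N → ℝ → ℝ)
    (hcont : ∀ n, ContinuousOn (x n) (Set.Ici 0)) (hx0 : ∀ n, x n 0 = 0) :
    sInf ((fun t : ℝ≥0 => (t : ℝ≥0∞)) ''
        {t : ℝ≥0 | 0 < t ∧ ∀ z : AddCircle (2 * l),
          ∃ n : Fin N, ∃ s : ℝ≥0, s ≤ t ∧
            dist ((x n (s : ℝ) : ℝ) : AddCircle (2 * l)) z ≤ r})
      = sInf ((fun t : ℝ≥0 => (t : ℝ≥0∞)) ''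
        {t : ℝ≥0 | 0 < t ∧
          (⨆ n : Fin N, sSup ((fun s : ℝ => x n s) '' Set.Icc 0 (t : ℝ)))
            - (⨅ n : Fin N, sInf ((fun s : ℝ => x n s) '' Set.Icc 0 (t : ℝ)))
          ≥ 2 * (l - r)}) := by
  have : Nonempty (Fin N) := ⟨⟨0, hN⟩⟩
  congr 2
  ext t
  refine and_congr_right fun _ => ?_
  have hrange :=
    ContinuousOn.iUnion_image_Icc t.2 (fun n => (hcont n).mono Icc_subset_Ici_self) hx0
  have hzero : (0 : ℝ) ∈ ⋃ n, x n '' Icc 0 t :=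
    mem_iUnion.2 ⟨⟨0, hN⟩, 0, left_mem_Icc.2 t.2, hx0 _⟩
  have hle := nonempty_Icc.1 ⟨0, hrange ▸ hzero⟩
  have hlen (d : ℝ) : 2 * (l - r) ≤ d ↔ 2 * l ≤ d + 2 * r := by
    constructor <;> intro <;> linarith
  refine Iff.trans ?_ ((AddCircle.forall_exists_Icc_dist_le_iff (by linarith) hle hr.le).trans
    (hlen _).symm)
  rw [← hrange]
  simp [NNReal.exists, ← NNReal.coe_le_coe, and_assoc, and_left_comm]
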